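/- For any nonzero vectors x, y ∈ (ℝ\{0})^N and L-CoLT matrix M, the two-sided scaling diag(x)·M·diag(y) is again an L-CoLT matrix, and it equals E_1 ⊙ M ⊙ E_2 where E_1 has entries (E_1)_{ij} = x_i and E_2 has entries (E_2)_{ij} = y_j on the lower triangular part (zero above the diagonal). -/

import Mathlib

open Matrix Finset

/-- `A` is an L-CoLT matrix with ratio vector `r` (0-indexed; `r` has `N-1` meaningful
nonzero entries): `A (i+1) j = r i * A i j` for `j ≤ i`, and `A i j = 0` for `i < j`. -/
def IsLCoLT {N : ℕ} (A : Matrix (Fin N) (Fin N) ℝ) (r : ℕ → ℝ) : Prop :=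
  (∀ k, k + 1 < N → r k ≠ 0) ∧
  (∀ i i' j : Fin N, (i' : ℕ) = (i : ℕ) + 1 → (j : ℕ) ≤ (i : ℕ) → A i' j = r i * A i j) ∧
  (∀ i j : Fin N, (i : ℕ) < (j : ℕ) → A i j = 0)

/-- `A` is a U-CoLT matrix with ratio vector `r'` (0-indexed; `r'` has `N-2` meaningful
nonzero entries): `A (i-1) j = r' (i-1) * A i j` for `i < j`, and `A i j = 0` for `j ≤ i`. -/
def IsUCoLT {N : ℕ} (A : Matrix (Fin N) (Fin N) ℝ) (r' : ℕ → ℝ) : Prop :=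
  (∀ k, k + 2 < N → r' k ≠ 0) ∧
  (∀ i i' j : Fin N, (i : ℕ) = (i' : ℕ) + 1 → (i : ℕ) < (j : ℕ) → A i' j = r' i' * A i j) ∧
  (∀ i j : Fin N, (j : ℕ) ≤ (i : ℕ) → A i j = 0)

namespace IsLCoLT

variable {N : ℕ} {A : Matrix (Fin N) (Fin N) ℝ} {r : ℕ → ℝ}

theorem mul_diagonal (hA : IsLCoLT A r) (y : Fin N → ℝ) : IsLCoLT (A * diagonal y) r := by
  obtain ⟨hr, hrec, hlt⟩ := hA
  refine ⟨hr, fun i i' j hi hj => ?_, fun i j hij => ?_⟩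
  · simp only [Matrix.mul_diagonal, hrec i i' j hi hj, mul_assoc]
  · simp only [Matrix.mul_diagonal, hlt i j hij, zero_mul]

/-- Row `i` of `diagonal x * A` is row `i` of `A` scaled by `x i`, so the ratio between
consecutive rows picks up the factor `x (i + 1) / x i`; `Function.extend Fin.val x 1` reads
`x` as a sequence indexed by `ℕ`. -/
theorem diagonal_mul (hA : IsLCoLT A r) {x : Fin N → ℝ} (hx : ∀ i, x i ≠ 0) :
    IsLCoLT (diagonal x * A)
      (fun k => r k * Function.extend Fin.val x 1 (k + 1) / Function.extend Fin.val x 1 k) := by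
  obtain ⟨hr, hrec, hlt⟩ := hA
  have hext : ∀ i : Fin N, Function.extend Fin.val x 1 i = x i :=
    Fin.val_injective.extend_apply x 1
  refine ⟨fun k hk => ?_, fun i i' j hi hj => ?_, fun i j hij => ?_⟩
  · have h1 := hext ⟨k + 1, hk⟩
    have h0 := hext ⟨k, by omega⟩
    simp only at h1 h0 ⊢
    rw [h1, h0]
    exact div_ne_zero (mul_ne_zero (hr k hk) (hx _)) (hx _)
  · simp only [Matrix.diagonal_mul, hrec i i' j hi hj, ← hi, hext]
    field_simp [hx i]
  · simp only [Matrix.diagonal_mul, hlt i j hij, mul_zero]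

end IsLCoLT

theorem diagonal_mul_mul_diagonal_eq_hadamard {N : ℕ} (x y : Fin N → ℝ)
    {A : Matrix (Fin N) (Fin N) ℝ} (hA : ∀ i j : Fin N, (i : ℕ) < (j : ℕ) → A i j = 0) :
    diagonal x * A * diagonal y =
      hadamard
        (hadamard ((fun i j => if (j : ℕ) ≤ (i : ℕ) then x i else 0) : Matrix (Fin N) (Fin N) ℝ) A)
        ((fun i j => if (j : ℕ) ≤ (i : ℕ) then y j else 0) : Matrix (Fin N) (Fin N) ℝ) := by
  ext i j
  simp only [Matrix.mul_diagonal, Matrix.diagonal_mul, hadamard, of_apply]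
  split_ifs with h
  · rfl
  · simp only [hA i j (by omega), mul_zero, zero_mul]

theorem stmt8 {N : ℕ} (x y : Fin N → ℝ) (hx : ∀ i, x i ≠ 0)
    (A : Matrix (Fin N) (Fin N) ℝ) (r : ℕ → ℝ) (hA : IsLCoLT A r) :
    (∃ r', IsLCoLT (Matrix.diagonal x * A * Matrix.diagonal y) r') ∧
    Matrix.diagonal x * A * Matrix.diagonal y =
      Matrix.hadamard
        (Matrix.hadamard
          ((fun i j => if (j : ℕ) ≤ (i : ℕ) then x i else 0) : Matrix (Fin N) (Fin N) ℝ) A)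
        ((fun i j => if (j : ℕ) ≤ (i : ℕ) then y j else 0) : Matrix (Fin N) (Fin N) ℝ) :=
  ⟨⟨_, (hA.diagonal_mul hx).mul_diagonal y⟩, diagonal_mul_mul_diagonal_eq_hadamard x y hA.2.2⟩
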